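/- The BCH-recursion χ satisfies the simplified recursion χ(u) = u + BCH(−P(χ(u)), u) for all u ∈ A_1; i.e., the fixed point of a ↦ a − BCH(P(a'), (id−P)(a')) in a' coincides with the fixed point of a' ↦ u + BCH(−P(a'), u). -/

import Mathlib

open scoped BigOperators

noncomputable def expS (K : Type*) {A : Type*} [Field K] [CharZero K] [Ring A] [Algebra K A]
    [UniformSpace A] (a : A) : A :=
  ∑' n : ℕ, ((n.factorial : K)⁻¹) • a ^ n

noncomputable def logS (K : Type*) {A : Type*} [Field K] [CharZero K] [Ring A] [Algebra K A]
    [UniformSpace A] (a : A) : A :=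
  ∑' n : ℕ, (((-1 : K) ^ n) * ((n : K) + 1)⁻¹) • (a - 1) ^ (n + 1)

noncomputable def BCHs (K : Type*) {A : Type*} [Field K] [CharZero K] [Ring A] [Algebra K A]
    [UniformSpace A] (x y : A) : A :=
  logS K (expS K x * expS K y) - x - y

/-- A complete decreasing multiplicative filtration defining the topology of `A`. -/
def IsCompleteFiltration (K : Type*) {A : Type*} [Field K] [CharZero K] [Ring A] [Algebra K A]
    [UniformSpace A] (F : ℕ → Submodule K A) : Prop :=
  F 0 = ⊤ ∧ (∀ n, F (n + 1) ≤ F n) ∧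
    (∀ m n : ℕ, ∀ x ∈ F m, ∀ y ∈ F n, x * y ∈ F (m + n)) ∧
    (∀ n, IsOpen ((F n : Set A))) ∧
    (∀ U ∈ nhds (0 : A), ∃ n, ((F n : Set A)) ⊆ U)

variable {K : Type*} [Field K] [CharZero K] {A : Type*} [Ring A] [Algebra K A]
  [UniformSpace A] [CompleteSpace A] [T2Space A] [IsTopologicalRing A]
  [IsUniformAddGroup A]

/-!
Write `p = P (χ u)` and `q = χ u - p`. The recursion for `χ` says exactly that
`log (exp p * exp q) = u`, hence `exp u = exp p * exp q`, `exp (-p) * exp u = exp q`, and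
`BCH (-p, u) = q + p - u = χ u - u`.

So everything rests on `expS` and `logS` being inverse bijections between `F 1` and `1 + F 1`, and
on `exp (-x) * exp x = 1`. These are the formal identities `log (exp X) = X` (both sides have
derivative `1`), `exp (log (1 + X)) = 1 + X` (a one-sided compositional inverse is two-sided) and
`exp X * exp (-X) = 1` in `K⟦X⟧`, evaluated at elements of `F 1`: a power series converges at every
`x ∈ F 1`, and since the filtration is complete and separated, evaluation at `x` is an algebra
homomorphism that is compatible with substitution.
-/

open PowerSeries Filter Topology

namespace PowerSeries

theorem subst_eq_X_of_subst_eq_X {R : Type*} [CommRing R] {P Q : R⟦X⟧}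
    (hP : constantCoeff P = 0) (hP₁ : IsUnit (coeff 1 P)) (hQ : constantCoeff Q = 0)
    (h : P.subst Q = X) : Q.subst P = X := by
  have hQ' : HasSubst Q := .of_constantCoeff_zero' hQ
  have hP' : HasSubst P := .of_constantCoeff_zero' hP
  have hQinv : Q = P.substInvOfIsUnit hP₁ := calc
    Q = subst Q (X : R⟦X⟧) := (subst_X hQ').symm
    _ = subst Q ((P.substInvOfIsUnit hP₁).subst P) := by rw [subst_substInvOfIsUnit_left _ hP]
    _ = P.substInvOfIsUnit hP₁ := by rw [subst_comp_subst_apply hP' hQ', h, X_subst]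
  rw [hQinv, subst_substInvOfIsUnit_left _ hP]

theorem X_pow_dvd_sub_trunc {R : Type*} [CommRing R] (n : ℕ) (f : R⟦X⟧) :
    X ^ n ∣ f - (trunc n f : R⟦X⟧) :=
  X_pow_dvd_iff.mpr fun m hm => by simp [coeff_trunc, hm]

theorem X_pow_dvd_subst {R : Type*} [CommRing R] {n : ℕ} {f g : R⟦X⟧}
    (hg : constantCoeff g = 0) (hf : X ^ n ∣ f) : X ^ n ∣ (f.subst g : R⟦X⟧) := by
  obtain ⟨q, rfl⟩ := hf
  have hg' : HasSubst g := .of_constantCoeff_zero' hg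
  rw [subst_mul hg', subst_pow hg', subst_X hg']
  exact dvd_mul_of_dvd_left (pow_dvd_pow_of_dvd (X_dvd_iff.mpr hg) n) _

theorem one_add_X_mul_derivative_log : (1 + X) * d⁄dX K (log K) = 1 := by
  ext n
  rcases n with _ | n
  · simp [deriv_log, add_mul]
  · simp [deriv_log, add_mul, pow_succ, coeff_one]

theorem log_subst_exp_sub_one : (log K).subst (exp K - 1) = X := by
  have hE₀ : constantCoeff (exp K - 1) = 0 := by simp
  have hE : HasSubst (exp K - 1) := .of_constantCoeff_zero' hE₀
  have hinv : exp K * (d⁄dX K (log K)).subst (exp K - 1) = 1 := by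
    have := congrArg (substAlgHom hE) (one_add_X_mul_derivative_log (K := K))
    rwa [map_mul, map_add, map_one, substAlgHom_X, add_sub_cancel, coe_substAlgHom] at this
  refine derivative.ext ?_ ?_
  · rw [derivative_subst hE, map_sub, derivative_exp, derivative_one, sub_zero, mul_comm, hinv,
      derivative_X]
  · rw [constantCoeff_X]
    exact constantCoeff_subst_eq_zero hE₀ _ constantCoeff_log

theorem exp_sub_one_subst_log : (exp K - 1).subst (log K) = X :=
  subst_eq_X_of_subst_eq_X constantCoeff_log (by simp) (by simp) log_subst_exp_sub_one

section Evaluation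

variable {S : Type*} [CommSemiring S] {R : Type*} [Ring R] [Algebra S R] [TopologicalSpace R]

/-- Junk value `0` where the series diverges; it is only evaluated at `x ∈ F 1` for a complete
filtration `F`, where it converges. -/
noncomputable def tsumEval (f : S⟦X⟧) (x : R) : R :=
  ∑' n, coeff n f • x ^ n

theorem tsumEval_rescale (c : S) (f : S⟦X⟧) (x : R) :
    (rescale c f).tsumEval x = f.tsumEval (c • x) := by
  refine tsum_congr fun n => ?_
  rw [coeff_rescale, smul_pow, smul_smul, mul_comm]

theorem tsumEval_C (c : S) (x : R) : (C c).tsumEval x = algebraMap S R c := by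
  rw [tsumEval, tsum_eq_single 0 fun n hn => by simp [coeff_C, hn]]
  simp [Algebra.algebraMap_eq_smul_one]

theorem tsumEval_X (x : R) : (X : S⟦X⟧).tsumEval x = x := by
  rw [tsumEval, tsum_eq_single 1 fun n hn => by simp [coeff_X, hn]]
  simp

end Evaluation

end PowerSeries

section ExpS

variable {R : Type*} [Ring R] [Algebra K R] [UniformSpace R]

theorem expS_eq_tsumEval (x : R) : expS K x = (exp K).tsumEval x :=
  tsum_congr fun n => by simp

theorem expS_neg_eq_tsumEval (x : R) : expS K (-x) = (rescale (-1 : K) (exp K)).tsumEval x := by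
  rw [tsumEval_rescale, neg_one_smul, expS_eq_tsumEval]

end ExpS

namespace IsCompleteFiltration

variable {R : Type*} [Ring R] [Algebra K R] [UniformSpace R] {F : ℕ → Submodule K R}

theorem antitone (hF : IsCompleteFiltration K F) : Antitone F :=
  antitone_nat_of_succ_le hF.2.1

theorem mul_mem (hF : IsCompleteFiltration K F) {m n : ℕ} {x y : R} (hx : x ∈ F m)
    (hy : y ∈ F n) : x * y ∈ F (m + n) :=
  hF.2.2.1 m n x hx y hy

theorem pow_mem (hF : IsCompleteFiltration K F) {x : R} (hx : x ∈ F 1) (n : ℕ) : x ^ n ∈ F n := by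
  induction n with
  | zero => simp [hF.1]
  | succ n ih => rw [pow_succ]; exact hF.mul_mem ih hx

theorem mul_sub_one_mem (hF : IsCompleteFiltration K F) {a b : R} (ha : a - 1 ∈ F 1)
    (hb : b - 1 ∈ F 1) : a * b - 1 ∈ F 1 := by
  have h : a * b - 1 = (a - 1) * (b - 1) + (a - 1) + (b - 1) := by noncomm_ring
  rw [h]
  exact add_mem (add_mem (hF.antitone one_le_two (hF.mul_mem ha hb)) ha) hb

theorem eq_of_forall_sub_mem [T1Space R] (hF : IsCompleteFiltration K F) {a b : R}
    (h : ∀ n, a - b ∈ F n) : a = b := by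
  have : (a - b) ⤳ 0 := specializes_iff_pure.mpr fun U hU => by
    obtain ⟨n, hn⟩ := hF.2.2.2.2 U hU
    exact hn (h n)
  exact sub_eq_zero.mp this.eq

theorem nonarchimedeanAddGroup [IsTopologicalAddGroup R] (hF : IsCompleteFiltration K F) :
    NonarchimedeanAddGroup R where
  is_nonarchimedean U hU := by
    obtain ⟨n, hn⟩ := hF.2.2.2.2 U hU
    exact ⟨⟨(F n).toAddSubgroup, hF.2.2.2.1 n⟩, hn⟩

theorem nonarchimedeanRing [IsTopologicalRing R] (hF : IsCompleteFiltration K F) :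
    NonarchimedeanRing R where
  is_nonarchimedean := hF.nonarchimedeanAddGroup.is_nonarchimedean

theorem tendsto_zero_of_mem (hF : IsCompleteFiltration K F) {t : ℕ → R} (ht : ∀ n, t n ∈ F n) :
    Tendsto t cofinite (𝓝 0) := by
  rw [Nat.cofinite_eq_atTop]
  intro U hU
  obtain ⟨n, hn⟩ := hF.2.2.2.2 U hU
  exact (eventually_ge_atTop n).mono fun m hm => hn (hF.antitone hm (ht m))

theorem summable_of_mem [CompleteSpace R] [IsUniformAddGroup R] (hF : IsCompleteFiltration K F)
    {t : ℕ → R} (ht : ∀ n, t n ∈ F n) : Summable t :=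
  haveI := hF.nonarchimedeanAddGroup
  NonarchimedeanAddGroup.summable_of_tendsto_cofinite_zero (hF.tendsto_zero_of_mem ht)

variable [CompleteSpace R] [IsUniformAddGroup R] {x : R}

theorem hasSum_tsumEval (hF : IsCompleteFiltration K F) (hx : x ∈ F 1) (f : K⟦X⟧) :
    HasSum (fun n => coeff n f • x ^ n) (f.tsumEval x) :=
  (hF.summable_of_mem fun n => Submodule.smul_mem _ _ (hF.pow_mem hx n)).hasSum

theorem logS_eq_tsumEval [T2Space R] (hF : IsCompleteFiltration K F) {a : R}
    (ha : a - 1 ∈ F 1) : logS K a = (log K).tsumEval (a - 1) := by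
  rw [tsumEval, (hF.hasSum_tsumEval ha _).summable.tsum_eq_zero_add]
  simp only [coeff_log, if_true, zero_smul, zero_add, logS]
  refine tsum_congr fun n => ?_
  simp only [Nat.add_eq_zero_iff, one_ne_zero, and_false, ↓reduceIte, Nat.cast_add, Nat.cast_one,
    map_div₀, eq_ratCast, Rat.cast_pow, Rat.cast_neg, Rat.cast_one, Rat.cast_add, Rat.cast_natCast]
  congr 1
  ring

theorem tsumEval_add [T2Space R] (hF : IsCompleteFiltration K F) (hx : x ∈ F 1) (f g : K⟦X⟧) :
    (f + g).tsumEval x = f.tsumEval x + g.tsumEval x := by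
  simp only [tsumEval, map_add, add_smul]
  exact ((hF.hasSum_tsumEval hx f).add (hF.hasSum_tsumEval hx g)).tsum_eq

theorem tsumEval_mul [T2Space R] [IsTopologicalRing R] (hF : IsCompleteFiltration K F)
    (hx : x ∈ F 1) (f g : K⟦X⟧) : (f * g).tsumEval x = f.tsumEval x * g.tsumEval x := by
  have := hF.nonarchimedeanRing
  have hf := (hF.hasSum_tsumEval hx f).summable
  have hg := (hF.hasSum_tsumEval hx g).summable
  have hfg := hf.mul_of_nonarchimedean hg
  rw [tsumEval, tsumEval, tsumEval, hf.tsum_mul_tsum_eq_tsum_sum_antidiagonal hg hfg]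
  refine tsum_congr fun n => ?_
  rw [coeff_mul, Finset.sum_smul]
  refine Finset.sum_congr rfl fun kl hkl => ?_
  rw [smul_mul_smul_comm, ← pow_add, Finset.HasAntidiagonal.mem_antidiagonal.mp hkl]

variable [T2Space R] [IsTopologicalRing R]

noncomputable def tsumEvalAlgHom (hF : IsCompleteFiltration K F) (hx : x ∈ F 1) :
    K⟦X⟧ →ₐ[K] R where
  toFun f := f.tsumEval x
  map_one' := by rw [← map_one C, tsumEval_C, map_one]
  map_mul' := hF.tsumEval_mul hx
  map_zero' := by simp [tsumEval]
  map_add' := hF.tsumEval_add hx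
  commutes' c := tsumEval_C c x

@[simp]
theorem tsumEvalAlgHom_apply (hF : IsCompleteFiltration K F) (hx : x ∈ F 1) (f : K⟦X⟧) :
    hF.tsumEvalAlgHom hx f = f.tsumEval x :=
  rfl

theorem tsumEval_mem_of_X_pow_dvd (hF : IsCompleteFiltration K F) (hx : x ∈ F 1) {n : ℕ}
    {f : K⟦X⟧} (hf : X ^ n ∣ f) : f.tsumEval x ∈ F n := by
  obtain ⟨q, rfl⟩ := hf
  rw [← tsumEvalAlgHom_apply hF hx, map_mul, map_pow, tsumEvalAlgHom_apply, tsumEval_X]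
  simpa using hF.mul_mem (hF.pow_mem hx n) (show q.tsumEval x ∈ F 0 by simp [hF.1])

theorem tsumEval_coe (hF : IsCompleteFiltration K F) (hx : x ∈ F 1) (p : Polynomial K) :
    (p : K⟦X⟧).tsumEval x = Polynomial.aeval x p := by
  have : (hF.tsumEvalAlgHom hx).comp (Polynomial.coeToPowerSeries.algHom K) =
      Polynomial.aeval x :=
    Polynomial.algHom_ext (by simp [tsumEval_X])
  exact DFunLike.congr_fun this p

theorem tsumEval_subst (hF : IsCompleteFiltration K F) (hx : x ∈ F 1) {f g : K⟦X⟧}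
    (hg : constantCoeff g = 0) : tsumEval (f.subst g) x = f.tsumEval (g.tsumEval x) := by
  have hy : g.tsumEval x ∈ F 1 := hF.tsumEval_mem_of_X_pow_dvd hx (by rwa [pow_one, X_dvd_iff])
  -- modulo `F n`, both sides are the polynomial `trunc n f` evaluated at `g.tsumEval x`
  refine hF.eq_of_forall_sub_mem fun n => ?_
  have hpoly : tsumEval ((trunc n f : K⟦X⟧).subst g) x =
      Polynomial.aeval (g.tsumEval x) (trunc n f) := by
    rw [subst_coe (.of_constantCoeff_zero' hg), ← tsumEvalAlgHom_apply hF hx,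
      ← Polynomial.aeval_algHom_apply, tsumEvalAlgHom_apply]
  have hsubst : tsumEval (f.subst g) x - Polynomial.aeval (g.tsumEval x) (trunc n f) ∈ F n := by
    rw [← hpoly, ← tsumEvalAlgHom_apply hF hx, ← tsumEvalAlgHom_apply hF hx, ← map_sub,
      ← subst_sub (.of_constantCoeff_zero' hg)]
    exact hF.tsumEval_mem_of_X_pow_dvd hx (X_pow_dvd_subst hg (X_pow_dvd_sub_trunc n f))
  have htrunc : f.tsumEval (g.tsumEval x) - Polynomial.aeval (g.tsumEval x) (trunc n f) ∈ F n := by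
    rw [← hF.tsumEval_coe hy, ← tsumEvalAlgHom_apply hF hy, ← tsumEvalAlgHom_apply hF hy, ← map_sub]
    exact hF.tsumEval_mem_of_X_pow_dvd hy (X_pow_dvd_sub_trunc n f)
  simpa using sub_mem hsubst htrunc

theorem expS_sub_one_eq_tsumEval (hF : IsCompleteFiltration K F) (hx : x ∈ F 1) :
    expS K x - 1 = (exp K - 1).tsumEval x := by
  rw [← tsumEvalAlgHom_apply hF hx, map_sub, map_one, tsumEvalAlgHom_apply, expS_eq_tsumEval]

theorem expS_sub_one_mem (hF : IsCompleteFiltration K F) (hx : x ∈ F 1) : expS K x - 1 ∈ F 1 := by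
  rw [hF.expS_sub_one_eq_tsumEval hx]
  exact hF.tsumEval_mem_of_X_pow_dvd hx (by simp [X_dvd_iff])

theorem logS_expS (hF : IsCompleteFiltration K F) (hx : x ∈ F 1) : logS K (expS K x) = x := by
  rw [hF.logS_eq_tsumEval (hF.expS_sub_one_mem hx), hF.expS_sub_one_eq_tsumEval hx,
    ← hF.tsumEval_subst hx (by simp), log_subst_exp_sub_one, tsumEval_X]

theorem expS_logS (hF : IsCompleteFiltration K F) {a : R} (ha : a - 1 ∈ F 1) :
    expS K (logS K a) = a := by
  have hlog : logS K a ∈ F 1 := by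
    rw [hF.logS_eq_tsumEval ha]
    exact hF.tsumEval_mem_of_X_pow_dvd ha (by simp [X_dvd_iff])
  rw [← sub_left_inj (a := 1), hF.expS_sub_one_eq_tsumEval hlog, hF.logS_eq_tsumEval ha,
    ← hF.tsumEval_subst ha constantCoeff_log, exp_sub_one_subst_log, tsumEval_X]

theorem expS_neg_mul_expS (hF : IsCompleteFiltration K F) (hx : x ∈ F 1) :
    expS K (-x) * expS K x = 1 := by
  rw [expS_neg_eq_tsumEval, expS_eq_tsumEval, ← hF.tsumEval_mul hx, mul_comm,
    ← evalNegHom.eq_def, exp_mul_exp_neg_eq_one, ← map_one C, tsumEval_C, map_one]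

end IsCompleteFiltration

theorem stmt9 (F : ℕ → Submodule K A) (hF : IsCompleteFiltration K F)
    (P : A →ₗ[K] A) (hP : ∀ n, ∀ x ∈ F n, P x ∈ F n)
    (χ : A → A) (hχmem : ∀ a ∈ F 1, χ a ∈ F 1)
    (hχ : ∀ a ∈ F 1, χ a = a - BCHs K (P (χ a)) (χ a - P (χ a))) :
    ∀ u ∈ F 1, χ u = u + BCHs K (-(P (χ u))) u := by
  intro u hu
  have hχu := hχ u hu
  set p := P (χ u)
  have hp : p ∈ F 1 := hP 1 _ (hχmem u hu)
  have hq : χ u - p ∈ F 1 := sub_mem (hχmem u hu) hp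
  have hlog : logS K (expS K p * expS K (χ u - p)) = u := by
    rw [BCHs] at hχu
    calc _ = χ u + (logS K (expS K p * expS K (χ u - p)) - p - (χ u - p)) := by abel
      _ = u := eq_sub_iff_add_eq.mp hχu
  have hexp : expS K u = expS K p * expS K (χ u - p) := by
    have := hF.expS_logS (hF.mul_sub_one_mem (hF.expS_sub_one_mem hp) (hF.expS_sub_one_mem hq))
    rwa [hlog] at this
  have hneg : expS K (-p) * expS K u = expS K (χ u - p) := by
    rw [hexp, ← mul_assoc, hF.expS_neg_mul_expS hp, one_mul]
  rw [BCHs, hneg, hF.logS_expS hq]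
  abel
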